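/- The commutant of the q-integration operator V_q on W(𝔻) is exactly the set of q-Duhamel multiplication operators: a bounded operator A on W(𝔻) satisfies A V_q = V_q A if and only if A = D_f for some f ∈ W(𝔻), namely f = A1 and A g = f ⋆_q g for all g. -/

import Mathlib

open Finset

/-- The Wiener algebra `W(𝔻)`, identified with `ℓ¹(ℕ)` via Taylor coefficients. -/
noncomputable abbrev Wiener := lp (fun _ : ℕ => ℂ) 1

noncomputable def qfact (q : ℂ) (n : ℕ) : ℂ :=
  ∏ j ∈ Finset.range n, (1 - q ^ (j + 1)) / (1 - q)

/-- Coefficients of the q-Duhamel product. -/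
noncomputable def duh (q : ℂ) (a b : ℕ → ℂ) (n : ℕ) : ℂ :=
  ∑ k ∈ Finset.range (n + 1), a k * b (n - k) * qfact q k * qfact q (n - k) / qfact q n

/-!
Since `V_q^k 1 = z^k / [k]_q!`, an operator `A` commuting with `V_q` satisfies
`A z^k = [k]_q! V_q^k (A 1)`, which is exactly `(A 1) ⋆_q z^k`; by continuity `A g = (A 1) ⋆_q g`
on all of `W(𝔻)`. Conversely `f ⋆_q V_q g = V_q (f ⋆_q g)`, so every `D_f` commutes with `V_q`.
-/

/-- The `q`-number `[n]_q`. -/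
noncomputable def qNum (q : ℂ) (n : ℕ) : ℂ :=
  (1 - q ^ n) / (1 - q)

/-- Coefficients of the Jackson `q`-integral `∫₀^z b(t) d_q t`, which sends `z ^ n` to
`z ^ (n + 1) / [n + 1]_q`. -/
noncomputable def qInt (q : ℂ) (b : ℕ → ℂ) : ℕ → ℂ
  | 0 => 0
  | n + 1 => b n / qNum q (n + 1)

@[simp]
lemma qInt_zero (q : ℂ) (b : ℕ → ℂ) : qInt q b 0 = 0 := rfl

@[simp]
lemma qInt_succ (q : ℂ) (b : ℕ → ℂ) (n : ℕ) : qInt q b (n + 1) = b n / qNum q (n + 1) := rfl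

lemma qNum_succ_ne_zero {q : ℂ} (hq : ‖q‖ < 1) (n : ℕ) : qNum q (n + 1) ≠ 0 := by
  have hpow : ∀ m : ℕ, m ≠ 0 → 1 - q ^ m ≠ 0 := fun m hm h => by
    have : ‖q ^ m‖ < 1 := by rw [norm_pow]; exact pow_lt_one₀ (norm_nonneg q) hq hm
    rw [← sub_eq_zero.mp h, norm_one] at this
    exact this.false
  exact div_ne_zero (hpow _ n.succ_ne_zero) (by simpa using hpow 1 one_ne_zero)

lemma qfact_zero (q : ℂ) : qfact q 0 = 1 := prod_range_zero _

lemma qfact_succ (q : ℂ) (n : ℕ) : qfact q (n + 1) = qfact q n * qNum q (n + 1) :=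
  prod_range_succ _ n

lemma qInt_single (q c : ℂ) (k : ℕ) :
    qInt q (Pi.single k c) = Pi.single (k + 1) (c / qNum q (k + 1)) := by
  funext m
  rcases m with _ | m
  · simp
  · by_cases hm : m = k
    · subst hm; simp
    · simp [hm]

section Duhamel

variable {q : ℂ} (hq : ∀ n, qNum q (n + 1) ≠ 0)
include hq

lemma qfact_ne_zero (n : ℕ) : qfact q n ≠ 0 :=
  prod_ne_zero_iff.mpr fun j _ => hq j

lemma duh_single_zero (a : ℕ → ℂ) (c : ℂ) : duh q a (Pi.single 0 c) = c • a := by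
  funext n
  rw [duh, sum_eq_single n]
  · simp only [Pi.single_eq_same, Nat.sub_self, qfact_zero, Pi.smul_apply, smul_eq_mul]
    field_simp [qfact_ne_zero hq n]
  · intro k hk hkn
    have : n - k ≠ 0 := by have := mem_range.mp hk; omega
    simp [this]
  · simp

lemma duh_qInt (a b : ℕ → ℂ) : duh q a (qInt q b) = qInt q (duh q a b) := by
  funext n
  rcases n with _ | n
  · simp [duh, qInt]
  · rw [duh, sum_range_succ, Nat.sub_self]
    simp only [qInt_zero, qInt_succ, mul_zero, zero_mul, zero_div, add_zero]
    rw [duh, sum_div]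
    refine sum_congr rfl fun k hk => ?_
    obtain ⟨j, rfl⟩ : ∃ j, n = k + j := ⟨n - k, by have := mem_range.mp hk; omega⟩
    rw [show k + j + 1 - k = j + 1 by omega, Nat.add_sub_cancel_left,
      qInt_succ, qfact_succ, qfact_succ]
    have := hq j
    have := hq (k + j)
    have := qfact_ne_zero hq (k + j)
    field_simp

end Duhamel

noncomputable def duhCoeff (q : ℂ) (a : ℕ → ℂ) (n : ℕ) : Wiener →L[ℂ] ℂ :=
  ∑ k ∈ range (n + 1), (a k * qfact q k * qfact q (n - k) / qfact q n) • lp.evalCLM ℂ _ 1 (n - k)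

lemma duhCoeff_apply (q : ℂ) (a : ℕ → ℂ) (n : ℕ) (b : Wiener) :
    duhCoeff q a n b = duh q a ⇑b n := by
  simp only [duhCoeff, duh, _root_.sum_apply, _root_.smul_apply, smul_eq_mul]
  refine sum_congr rfl fun k _ => ?_
  rw [show lp.evalCLM ℂ _ 1 (n - k) b = b (n - k) from rfl]
  ring

section Commutant

variable {q : ℂ} (hq : ∀ n, qNum q (n + 1) ≠ 0) {V A : Wiener →L[ℂ] Wiener}
  (hV : ∀ a : Wiener, ⇑(V a) = qInt q ⇑a)
include hq hV

lemma apply_single_eq_single_succ (k : ℕ) (c : ℂ) :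
    V (lp.single 1 k (qNum q (k + 1) * c)) = lp.single 1 (k + 1) c :=
  lp.ext <| by rw [hV, lp.coeFn_single, lp.coeFn_single, qInt_single, mul_div_cancel_left₀ _ (hq k)]

lemma comp_comm_of_coe_eq_duh (f : Wiener) (hA : ∀ g, ⇑(A g) = duh q ⇑f ⇑g) :
    A.comp V = V.comp A := by
  ext1 g
  refine lp.ext ?_
  rw [ContinuousLinearMap.comp_apply, ContinuousLinearMap.comp_apply, hA, hV, duh_qInt hq, hV, hA]

variable (hAV : A.comp V = V.comp A)
include hAV

lemma coe_apply_single_eq_duh (k : ℕ) (c : ℂ) :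
    ⇑(A (lp.single 1 k c)) = duh q ⇑(A (lp.single 1 0 1)) (Pi.single k c) := by
  induction k generalizing c with
  | zero =>
    rw [duh_single_zero hq, ← lp.coeFn_smul, ← map_smul, ← lp.single_smul, smul_eq_mul, mul_one]
  | succ k ih =>
    rw [← apply_single_eq_single_succ hq hV, ← ContinuousLinearMap.comp_apply, hAV,
      ContinuousLinearMap.comp_apply, hV, ih, ← duh_qInt hq, qInt_single,
      mul_div_cancel_left₀ _ (hq k)]

lemma coe_apply_eq_duh (g : Wiener) : ⇑(A g) = duh q ⇑(A (lp.single 1 0 1)) ⇑g := by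
  funext n
  have hcoeff : (lp.evalCLM ℂ _ 1 n).comp A = duhCoeff q ⇑(A (lp.single 1 0 1)) n := by
    refine lp.ext_continuousLinearMap ENNReal.one_ne_top fun k => ContinuousLinearMap.ext_ring ?_
    simp only [ContinuousLinearMap.comp_apply, lp.singleContinuousLinearMap_apply, duhCoeff_apply,
      ← coe_apply_single_eq_duh hq hV hAV, lp.coeFn_single]
    rfl
  rw [← duhCoeff_apply, ← hcoeff]
  rfl

end Commutant

/-- The commutant of the q-integration operator `V_q` on `W(𝔻)` consists exactly of the
q-Duhamel multiplication operators: a bounded operator `A` commutes with `V_q` iff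
`A g = f ⋆_q g` for some `f ∈ W(𝔻)` (namely `f = A 1`). -/
theorem commutant_Vq (q : ℝ) (hq0 : 0 < q) (hq1 : q < 1) (V A : Wiener →L[ℂ] Wiener)
    (hV : ∀ a : Wiener, (V a : ∀ _ : ℕ, ℂ) 0 = 0 ∧
      ∀ n : ℕ, (V a : ∀ _ : ℕ, ℂ) (n + 1)
        = (a : ∀ _ : ℕ, ℂ) n / ((1 - (q : ℂ) ^ (n + 1)) / (1 - (q : ℂ)))) :
    A.comp V = V.comp A ↔
      ∃ f : Wiener, ∀ (g : Wiener) (n : ℕ),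
        (A g : ∀ _ : ℕ, ℂ) n = duh (q : ℂ) (f : ∀ _ : ℕ, ℂ) (g : ∀ _ : ℕ, ℂ) n := by
  have hq : ∀ n, qNum q (n + 1) ≠ 0 :=
    qNum_succ_ne_zero (by rwa [Complex.norm_real, Real.norm_of_nonneg hq0.le])
  have hV' : ∀ a : Wiener, ⇑(V a) = qInt q ⇑a := fun a => funext fun
    | 0 => (hV a).1
    | n + 1 => (hV a).2 n
  constructor
  · exact fun hAV => ⟨_, fun g => congrFun (coe_apply_eq_duh hq hV' hAV g)⟩
  · rintro ⟨f, hf⟩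
    exact comp_comm_of_coe_eq_duh hq hV' f fun g => funext (hf g)
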